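/- arXiv:0909.5590 — 5 statements merged into one kernel-verified Lean document; each statement's English description precedes it below -/
import Mathlib

section
/- Let B be a category admitting equalisers, G = (G, δ, ε) a comonad on a category A, and F : B → A a functor with right adjoint R (unit η : Id → RF, counit σ : FR → Id). Suppose there is a functor F̄ : B → A^G with U^G ∘ F̄ = F, with associated left G-comodule structure β : F → GF and comonad morphism t = Gσ ∘ βR : FR → G, and let R̄ : A^G → B be the right adjoint of F̄ (which exists since B has equalisers), with counit ε̄ : F̄R̄ → Id. Then the following are equivalent: (a) t : FR → G is an isomorphism (F is G-Galois); (b) the composite φ^G σ ∘ η^G F̄R : F̄R → φ^G is an isomorphism, where η^G : Id → φ^G U^G is the unit of the adjunction U^G ⊣ φ^G; (c) F̄ restricts to an equivalence of categories Inj(F, B) → Inj(U^G, A^G); (d) for every object (a, θ_a) of Inj(U^G, A^G), the component ε̄_{(a,θ_a)} is an isomorphism; (e) for every object a of A, the component ε̄_{φ^G(a)} = ε̄_{(G(a), δ_a)} is an isomorphism. -/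
/-!
Everything is controlled by the cofree coalgebras. Since `R ≅ R̄ ∘ φ^G` (both are right adjoint
to `U^G F̄ = F`), the map in (b) at `a` is `F̄` of an isomorphism followed by `ε̄_{φ^G a}`, which
gives (b) ⇔ (e); and (a) ⇔ (b) because `U^G` reflects isomorphisms and sends the map in (b) to `t`.

For an adjunction `H ⊣ K`, an object is `H`-injective iff it is a retract of some `K a`. Hence
`U^G`-injective coalgebras are retracts of cofree ones, which gives (d) ⇔ (e), and `R̄` always
sends `U^G`-injectives to retracts of `R̄ φ^G a ≅ R a`, i.e. to `F`-injectives. So once `F̄`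
preserves injectives, `F̄ ⊣ R̄` restricts to an adjunction `Inj(F, B) ⇄ Inj(U^G, A^G)`, and (c)
says that it is an equivalence. Under (e), `F̄` does preserve injectives, as `F̄ R a ≅ φ^G a`;
the restricted counit is invertible by (d), and the unit is invertible on `R̄ φ^G a` by a
triangle identity, hence on its retracts, which include all `F`-injectives.
-/

open CategoryTheory CategoryTheory.Limits

namespace Paper

variable {A : Type*} [Category A] {B : Type*} [Category B]

/-- A left `G`-comodule structure `β : F ⟶ GF` on a functor `F : B ⥤ A`. -/
structure ComoduleStruct (G : Comonad A) (F : B ⥤ A) where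
  β : F ⟶ F ⋙ (G : A ⥤ A)
  counit : ∀ b : B, β.app b ≫ G.ε.app (F.obj b) = 𝟙 (F.obj b)
  coassoc : ∀ b : B, β.app b ≫ G.δ.app (F.obj b) = β.app b ≫ (G : A ⥤ A).map (β.app b)

/-- The lifting `F̄ : B ⥤ A^G` of a `G`-comodule functor `(F, β)`, satisfying `U^G ∘ F̄ = F`. -/
@[simps]
def ComoduleStruct.lift {G : Comonad A} {F : B ⥤ A} (c : ComoduleStruct G F) :
    B ⥤ G.Coalgebra where
  obj b :=
    { A := F.obj b
      a := c.β.app b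
      counit := c.counit b
      coassoc := c.coassoc b }
  map f :=
    { f := F.map f
      h := (c.β.naturality f).symm }

/-- The comonad morphism `t = Gσ ∘ βR : FR ⟶ G` associated with a `G`-comodule functor `F`
with right adjoint `R` (counit `σ`). -/
def ComoduleStruct.galoisHom {G : Comonad A} {F : B ⥤ A} (c : ComoduleStruct G F)
    (R : A ⥤ B) (adj : F ⊣ R) : R ⋙ F ⟶ (G : A ⥤ A) :=
  Functor.whiskerLeft R c.β ≫ Functor.whiskerRight adj.counit (G : A ⥤ A) ≫ (Functor.leftUnitor _).hom

/-- An object `b` is `F`-injective if any morphism out of `b₁` which becomes a split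
monomorphism under `F` allows extension of morphisms `b₁ ⟶ b`. -/
def FInjective (F : B ⥤ A) (b : B) : Prop :=
  ∀ ⦃b₁ b₂ : B⦄ (f : b₁ ⟶ b₂) (g : b₁ ⟶ b), IsSplitMono (F.map f) → ∃ h : b₂ ⟶ b, f ≫ h = g

/-- The composite `φ^G σ ∘ η^G F̄R : F̄R ⟶ φ^G` (condition (b)). -/
def ComoduleStruct.cofreeComparison {G : Comonad A} {F : B ⥤ A} (c : ComoduleStruct G F)
    (R : A ⥤ B) (adj : F ⊣ R) : R ⋙ c.lift ⟶ G.cofree :=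
  Functor.whiskerLeft (R ⋙ c.lift) G.adj.unit ≫ Functor.whiskerRight adj.counit G.cofree

section Injective

lemma FInjective.of_retract {H : B ⥤ A} {b b' : B} (e : Retract b b') (hb' : FInjective H b') :
    FInjective H b := by
  intro b₁ b₂ f g hf
  obtain ⟨k, hk⟩ := hb' f (g ≫ e.i) hf
  exact ⟨k ≫ e.r, by rw [reassoc_of% hk, e.retract, Category.comp_id]⟩

lemma finjective_rightAdjoint_obj {H : B ⥤ A} {K : A ⥤ B} (adj : H ⊣ K) (a : A) :
    FInjective H (K.obj a) := by
  intro b₁ b₂ f g hf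
  refine ⟨adj.homEquiv _ _ (retraction (H.map f) ≫ (adj.homEquiv _ _).symm g), ?_⟩
  rw [← adj.homEquiv_naturality_left, ← Category.assoc, IsSplitMono.id, Category.id_comp,
    Equiv.apply_symm_apply]

noncomputable def FInjective.retractUnit {H : B ⥤ A} {K : A ⥤ B} (adj : H ⊣ K) {b : B}
    (hb : FInjective H b) : Retract b (K.obj (H.obj b)) where
  i := adj.unit.app b
  r := (hb (adj.unit.app b) (𝟙 b)
    (IsSplitMono.mk' ⟨adj.counit.app _, adj.left_triangle_components b⟩)).choose
  retract := (hb (adj.unit.app b) (𝟙 b)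
    (IsSplitMono.mk' ⟨adj.counit.app _, adj.left_triangle_components b⟩)).choose_spec

end Injective

lemma NatTrans.isIso_app_of_retract {C D : Type*} [Category C] [Category D] {T T' : C ⥤ D}
    (α : T ⟶ T') {X Y : C} (e : Retract X Y) [IsIso (α.app Y)] : IsIso (α.app X) :=
  (MorphismProperty.isomorphisms D).of_retract (α.retractArrowApp e) (inferInstanceAs (IsIso _))

section Restriction

variable {C : Type*} [Category C] {D : Type*} [Category D] {L : C ⥤ D} {M : D ⥤ C}
  (adj : L ⊣ M) {P : ObjectProperty C} {Q : ObjectProperty D}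
  (hL : ∀ X, P X → Q (L.obj X))

noncomputable def restrictedAdjunction (hM : ∀ Y, Q Y → P (M.obj Y)) :
    Q.lift (P.ι ⋙ L) (fun X => hL X.obj X.property) ⊣
      P.lift (Q.ι ⋙ M) (fun Y => hM Y.obj Y.property) :=
  adj.restrictFullyFaithful P.fullyFaithfulι Q.fullyFaithfulι (Iso.refl _) (Iso.refl _)

lemma restrictedAdjunction_unit_app_hom (hM : ∀ Y, Q Y → P (M.obj Y)) (X : P.FullSubcategory) :
    ((restrictedAdjunction adj hL hM).unit.app X).hom = adj.unit.app X.obj :=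
  (adj.map_restrictFullyFaithful_unit_app P.fullyFaithfulι Q.fullyFaithfulι (Iso.refl _)
    (Iso.refl _) X (L := Q.lift (P.ι ⋙ L) fun X => hL X.obj X.property)
    (R := P.lift (Q.ι ⋙ M) fun Y => hM Y.obj Y.property)).trans (by simp)

lemma restrictedAdjunction_counit_app_hom (hM : ∀ Y, Q Y → P (M.obj Y)) (Y : Q.FullSubcategory) :
    ((restrictedAdjunction adj hL hM).counit.app Y).hom = adj.counit.app Y.obj :=
  (adj.map_restrictFullyFaithful_counit_app P.fullyFaithfulι Q.fullyFaithfulι (Iso.refl _)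
    (Iso.refl _) Y (L := Q.lift (P.ι ⋙ L) fun X => hL X.obj X.property)
    (R := P.lift (Q.ι ⋙ M) fun Y => hM Y.obj Y.property)).trans (by simp)

lemma isIso_counit_app_of_isEquivalence_lift (hM : ∀ Y, Q Y → P (M.obj Y))
    [(Q.lift (P.ι ⋙ L) fun X => hL X.obj X.property).IsEquivalence] {Y : D} (hY : Q Y) :
    IsIso (adj.counit.app Y) := by
  rw [← restrictedAdjunction_counit_app_hom adj hL hM ⟨Y, hY⟩]
  exact Q.ι.map_isIso ((restrictedAdjunction adj hL hM).counit.app ⟨Y, hY⟩)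

lemma isEquivalence_lift_of_isIso (hM : ∀ Y, Q Y → P (M.obj Y))
    (hη : ∀ X, P X → IsIso (adj.unit.app X)) (hε : ∀ Y, Q Y → IsIso (adj.counit.app Y)) :
    (Q.lift (P.ι ⋙ L) fun X => hL X.obj X.property).IsEquivalence := by
  have (X : P.FullSubcategory) : IsIso ((restrictedAdjunction adj hL hM).unit.app X) := by
    have := hη X.obj X.property
    rw [← restrictedAdjunction_unit_app_hom adj hL hM X] at this
    exact (isIso_iff_of_reflects_iso _ P.ι).mp this
  have (Y : Q.FullSubcategory) : IsIso ((restrictedAdjunction adj hL hM).counit.app Y) := by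
    have := hε Y.obj Y.property
    rw [← restrictedAdjunction_counit_app_hom adj hL hM Y] at this
    exact (isIso_iff_of_reflects_iso _ Q.ι).mp this
  exact (restrictedAdjunction adj hL hM).toEquivalence.isEquivalence_functor

end Restriction

section Comodule

variable {G : Comonad A} {F : B ⥤ A} (c : ComoduleStruct G F) (R : A ⥤ B) (adj : F ⊣ R)

lemma forget_map_cofreeComparison_app (a : A) :
    G.forget.map ((c.cofreeComparison R adj).app a) = (c.galoisHom R adj).app a := by
  simp [ComoduleStruct.cofreeComparison, ComoduleStruct.galoisHom, Comonad.adj_unit]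
  rfl

lemma isIso_galoisHom_iff : IsIso (c.galoisHom R adj) ↔ IsIso (c.cofreeComparison R adj) := by
  simp only [NatTrans.isIso_iff_isIso_app, ← forget_map_cofreeComparison_app]
  exact forall_congr' fun a => isIso_iff_of_reflects_iso _ G.forget

lemma galoisHom_app_comp_ε (a : A) :
    (c.galoisHom R adj).app a ≫ G.ε.app a = adj.counit.app a := by
  simp [ComoduleStruct.galoisHom, reassoc_of% c.counit]

variable {Rbar : G.Coalgebra ⥤ B} (adj' : c.lift ⊣ Rbar)

noncomputable def rightAdjointIsoCofreeComp : R ≅ G.cofree ⋙ Rbar :=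
  adj.rightAdjointUniq (adj'.comp G.adj)

lemma cofreeComparison_app_eq (a : A) :
    (c.cofreeComparison R adj).app a =
      c.lift.map ((rightAdjointIsoCofreeComp c R adj adj').hom.app a) ≫
        adj'.counit.app (G.cofree.obj a) := by
  -- both sides are transposes of `adj.counit.app a` under `G.adj`
  have hl : G.forget.map ((c.cofreeComparison R adj).app a) ≫ G.ε.app a = adj.counit.app a := by
    rw [forget_map_cofreeComparison_app]
    exact galoisHom_app_comp_ε c R adj a
  have hr : G.forget.map (c.lift.map ((rightAdjointIsoCofreeComp c R adj adj').hom.app a) ≫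
      adj'.counit.app (G.cofree.obj a)) ≫ G.ε.app a = adj.counit.app a := by
    rw [← adj.rightAdjointUniq_hom_app_counit (adj'.comp G.adj) a, Adjunction.comp_counit_app]
    simp [rightAdjointIsoCofreeComp]
    exact Category.assoc _ _ _
  apply (G.adj.homEquiv _ _).symm.injective
  simp only [G.adj.homEquiv_counit, Comonad.adj_counit]
  exact hl.trans hr.symm

lemma isIso_cofreeComparison_iff :
    IsIso (c.cofreeComparison R adj) ↔ ∀ a : A, IsIso (adj'.counit.app (G.cofree.obj a)) := by
  simp only [NatTrans.isIso_iff_isIso_app, cofreeComparison_app_eq c R adj adj',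
    isIso_comp_left_iff]

end Comodule

section Injectivity

variable {G : Comonad A} {F : B ⥤ A} {c : ComoduleStruct G F} {R : A ⥤ B}
  {Rbar : G.Coalgebra ⥤ B}

lemma finjective_obj_of_finjective_forget (adj : F ⊣ R) (adj' : c.lift ⊣ Rbar) {X : G.Coalgebra}
    (hX : FInjective G.forget X) : FInjective F (Rbar.obj X) :=
  FInjective.of_retract
    (((hX.retractUnit G.adj).map Rbar).trans
      ((rightAdjointIsoCofreeComp c R adj adj').app X.A).symm.retract)
    (finjective_rightAdjoint_obj adj X.A)

lemma isIso_counit_app_of_finjective {L : B ⥤ G.Coalgebra} (adj' : L ⊣ Rbar)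
    (hcofree : ∀ a, IsIso (adj'.counit.app (G.cofree.obj a))) {X : G.Coalgebra}
    (hX : FInjective G.forget X) : IsIso (adj'.counit.app X) :=
  have := hcofree X.A
  NatTrans.isIso_app_of_retract adj'.counit (hX.retractUnit G.adj)

lemma isIso_unit_app_of_finjective (adj : F ⊣ R) (adj' : c.lift ⊣ Rbar)
    (hcofree : ∀ a, IsIso (adj'.counit.app (G.cofree.obj a))) {b : B} (hb : FInjective F b) :
    IsIso (adj'.unit.app b) := by
  have := hcofree (F.obj b)
  have : IsIso (adj'.unit.app ((G.cofree ⋙ Rbar).obj (F.obj b))) :=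
    isIso_of_comp_hom_eq_id _ (adj'.right_triangle_components _)
  exact NatTrans.isIso_app_of_retract adj'.unit
    ((hb.retractUnit adj).trans ((rightAdjointIsoCofreeComp c R adj adj').app _).retract)

lemma finjective_lift_obj (adj : F ⊣ R) (adj' : c.lift ⊣ Rbar)
    (hcofree : ∀ a, IsIso (adj'.counit.app (G.cofree.obj a))) {b : B} (hb : FInjective F b) :
    FInjective G.forget (c.lift.obj b) :=
  FInjective.of_retract
    ((((hb.retractUnit adj).trans ((rightAdjointIsoCofreeComp c R adj adj').app _).retract).map
      c.lift).trans (asIso (adj'.counit.app _)).retract)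
    (finjective_rightAdjoint_obj G.adj _)

end Injectivity

theorem statement0_general (G : Comonad A) (F : B ⥤ A) (R : A ⥤ B)
    (adj : F ⊣ R) (c : ComoduleStruct G F)
    (Rbar : G.Coalgebra ⥤ B) (adj' : c.lift ⊣ Rbar) :
    List.TFAE
      [ IsIso (c.galoisHom R adj),
        IsIso (c.cofreeComparison R adj),
        ∃ h : ∀ b : B, FInjective F b → FInjective G.forget (c.lift.obj b),
          (ObjectProperty.lift (FInjective G.forget)
            (ObjectProperty.ι (FInjective F) ⋙ c.lift)
            (fun X => h X.obj X.property)).IsEquivalence,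
        ∀ X : G.Coalgebra, FInjective G.forget X → IsIso (adj'.counit.app X),
        ∀ a : A, IsIso (adj'.counit.app (G.cofree.obj a)) ] := by
  have hRbar : ∀ X, FInjective G.forget X → FInjective F (Rbar.obj X) :=
    fun _ => finjective_obj_of_finjective_forget adj adj'
  tfae_have 1 ↔ 2 := isIso_galoisHom_iff c R adj
  tfae_have 2 ↔ 5 := isIso_cofreeComparison_iff c R adj adj'
  tfae_have 5 → 4 := fun h5 _ => isIso_counit_app_of_finjective adj' h5
  tfae_have 4 → 5 := fun h4 a => h4 _ (finjective_rightAdjoint_obj G.adj a)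
  tfae_have 5 → 3 := fun h5 =>
    ⟨fun _ => finjective_lift_obj adj adj' h5,
      isEquivalence_lift_of_isIso adj' _ hRbar
        (fun _ => isIso_unit_app_of_finjective adj adj' h5)
        (fun _ => isIso_counit_app_of_finjective adj' h5)⟩
  tfae_have 3 → 4 := fun ⟨h, _⟩ _ => isIso_counit_app_of_isEquivalence_lift adj' _ hRbar
  tfae_finish

/-- **Characterization of `G`-Galois comodule functors** (Theorem 1.11).
Let `B` admit equalisers, `G` a comonad on `A`, `F : B ⥤ A` with right adjoint `R`,
`F̄ : B ⥤ A^G` the lifting of a `G`-comodule structure on `F`, and `R̄` the right adjoint of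
`F̄` (with counit `ε̄`).  Then the following are equivalent:
(a) the comonad morphism `t : FR ⟶ G` is an isomorphism (`F` is `G`-Galois);
(b) the composite `φ^G σ ∘ η^G F̄R : F̄R ⟶ φ^G` is an isomorphism;
(c) `F̄` restricts to an equivalence `Inj(F, B) ≃ Inj(U^G, A^G)`;
(d) `ε̄` is an isomorphism on every `U^G`-injective object of `A^G`;
(e) `ε̄_{φ^G(a)}` is an isomorphism for every `a : A`. -/
theorem statement0 [HasEqualizers B] (G : Comonad A) (F : B ⥤ A) (R : A ⥤ B)
    (adj : F ⊣ R) (c : ComoduleStruct G F)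
    (Rbar : G.Coalgebra ⥤ B) (adj' : c.lift ⊣ Rbar) :
    List.TFAE
      [ IsIso (c.galoisHom R adj),
        IsIso (c.cofreeComparison R adj),
        ∃ h : ∀ b : B, FInjective F b → FInjective G.forget (c.lift.obj b),
          (ObjectProperty.lift (FInjective G.forget)
            (ObjectProperty.ι (FInjective F) ⋙ c.lift)
            (fun X => h X.obj X.property)).IsEquivalence,
        ∀ X : G.Coalgebra, FInjective G.forget X → IsIso (adj'.counit.app X),
        ∀ a : A, IsIso (adj'.counit.app (G.cofree.obj a)) ] :=
  statement0_general G F R adj c Rbar adj'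

end Paper
end

section
/- Let B be a category admitting coequalisers of reflexive pairs, T = (T, m, e) a monad on a category A, and R : B → A a functor with left adjoint F : A → B (unit η : Id → RF, counit ε : FR → Id). Suppose there is a functor R̄ : B → A_T with U_T ∘ R̄ = R, with associated left T-module structure α : TR → R and monad morphism t = αF ∘ Tη : T → RF, and let L̄ : A_T → B be the left adjoint of R̄ (which exists since B has coequalisers of reflexive pairs), with unit η̄ : Id → R̄L̄. Then the following are equivalent: (a) t : T → RF is an isomorphism (R is T-Galois); (b) the composite ε_T R̄F ∘ φ_T η : φ_T → R̄F is an isomorphism, where ε_T : φ_T U_T → Id is the counit of the adjunction φ_T ⊣ U_T; (c) R̄ restricts to an equivalence of categories Proj(R, B) → Proj(U_T, A_T); (d) for every object (a, h_a) of Proj(U_T, A_T), the component η̄_{(a,h_a)} is an isomorphism; (e) for every object a of A, the component η̄_{φ_T(a)} = η̄_{(T(a), m_a)} is an isomorphism. -/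
open CategoryTheory CategoryTheory.Limits

namespace Paper

variable {A : Type*} [Category A] {B : Type*} [Category B]

/-- A left `T`-module structure `α : TR ⟶ R` on a functor `R : B ⥤ A`. -/
structure ModuleStruct (T : Monad A) (R : B ⥤ A) where
  α : R ⋙ (T : A ⥤ A) ⟶ R
  unit : ∀ b : B, T.η.app (R.obj b) ≫ α.app b = 𝟙 (R.obj b)
  assoc : ∀ b : B, T.μ.app (R.obj b) ≫ α.app b = (T : A ⥤ A).map (α.app b) ≫ α.app b

/-- The lifting `R̄ : B ⥤ A_T` of a `T`-module functor `(R, α)`, satisfying `U_T ∘ R̄ = R`. -/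
@[simps]
def ModuleStruct.lift {T : Monad A} {R : B ⥤ A} (c : ModuleStruct T R) :
    B ⥤ T.Algebra where
  obj b :=
    { A := R.obj b
      a := c.α.app b
      unit := c.unit b
      assoc := c.assoc b }
  map f :=
    { f := R.map f
      h := c.α.naturality f }

/-- The monad morphism `t = αF ∘ Tη : T ⟶ RF` associated with a `T`-module functor `R`
with left adjoint `F` (unit `η`). -/
def ModuleStruct.galoisHom {T : Monad A} {R : B ⥤ A} (c : ModuleStruct T R)
    (F : A ⥤ B) (adj : F ⊣ R) : (T : A ⥤ A) ⟶ F ⋙ R :=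
  (Functor.leftUnitor _).inv ≫ Functor.whiskerRight adj.unit (T : A ⥤ A) ≫ Functor.whiskerLeft F c.α

/-- An object `b` is `R`-projective if any morphism into `b₂` which becomes a split
epimorphism under `R` allows lifting of morphisms `b ⟶ b₂`. -/
def FProjective (R : B ⥤ A) (b : B) : Prop :=
  ∀ ⦃b₁ b₂ : B⦄ (f : b₁ ⟶ b₂) (g : b ⟶ b₂), IsSplitEpi (R.map f) → ∃ h : b ⟶ b₁, h ≫ f = g

/-- The composite `ε_T R̄F ∘ φ_T η : φ_T ⟶ R̄F` (condition (b)). -/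
def ModuleStruct.freeComparison {T : Monad A} {R : B ⥤ A} (c : ModuleStruct T R)
    (F : A ⥤ B) (adj : F ⊣ R) : T.free ⟶ F ⋙ c.lift :=
  Functor.whiskerRight adj.unit T.free ≫ Functor.whiskerLeft (F ⋙ c.lift) T.adj.counit

/-!
The left adjoints `L̄ ∘ φ_T` and `F` of `R = U_T ∘ R̄` are isomorphic, so the free comparison
`φ_T ⟶ R̄F` is `η̄φ_T` followed by an isomorphism, while its underlying transformation is `t`;
this gives (a) ⇔ (b) ⇔ (e). Since `U_T`-projectives are the retracts of free algebras and
`R`-projectives the retracts of objects `F a ≅ L̄ φ_T a`, invertibility of `η̄` on free algebras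
spreads to all `U_T`-projectives and, by a triangle identity, forces the counit of `L̄ ⊣ R̄` to be
invertible on `R`-projectives. Then `L̄ ⊣ R̄` restricts to an adjoint equivalence between the
two subcategories of projectives, and conversely a restricted adjunction whose right adjoint is
an equivalence has invertible unit.
-/

lemma _root_.CategoryTheory.NatTrans.isIso_app_of_retract {C D : Type*} [Category C]
    [Category D] {S G : C ⥤ D} (θ : S ⟶ G) {X Y : C} (h : Retract X Y) [IsIso (θ.app Y)] :
    IsIso (θ.app X) :=
  (MorphismProperty.isomorphisms D).of_retract (θ.retractArrowApp h) (.infer_property _)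

section Projectivity

variable {C D : Type*} [Category C] [Category D]

lemma FProjective.of_retract {G : D ⥤ C} {Y Y' : D} (h : Retract Y Y')
    (hY' : FProjective G Y') : FProjective G Y := by
  intro Y₁ Y₂ f g hf
  obtain ⟨k, hk⟩ := hY' f (h.r ≫ g) hf
  exact ⟨h.i ≫ k, by rw [Category.assoc, hk, h.retract_assoc]⟩

lemma _root_.CategoryTheory.Adjunction.fProjective_obj {L : C ⥤ D} {G : D ⥤ C} (adj : L ⊣ G)
    (X : C) : FProjective G (L.obj X) := by
  intro Y₁ Y₂ f g hf
  refine ⟨(adj.homEquiv X Y₁).symm (adj.homEquiv X Y₂ g ≫ section_ (G.map f)), ?_⟩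
  rw [← Adjunction.homEquiv_naturality_right_symm, Category.assoc, IsSplitEpi.id,
    Category.comp_id, Equiv.symm_apply_apply]

lemma _root_.CategoryTheory.Adjunction.nonempty_retract_of_fProjective {L : C ⥤ D}
    {G : D ⥤ C} (adj : L ⊣ G) {Y : D} (hY : FProjective G Y) :
    Nonempty (Retract Y (L.obj (G.obj Y))) := by
  have : IsSplitEpi (G.map (adj.counit.app Y)) :=
    IsSplitEpi.mk' ⟨adj.unit.app (G.obj Y), adj.right_triangle_components Y⟩
  obtain ⟨s, hs⟩ := hY (adj.counit.app Y) (𝟙 Y) this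
  exact ⟨⟨s, adj.counit.app Y, hs⟩⟩

end Projectivity

section RestrictAdjunction

variable {C D : Type*} [Category C] [Category D] {L : C ⥤ D} {G : D ⥤ C} (adj : L ⊣ G)

lemma _root_.CategoryTheory.Adjunction.isIso_counit_app_of_retract {X : C}
    [IsIso (adj.unit.app X)] {Y : D} (h : Retract Y (L.obj X)) : IsIso (adj.counit.app Y) := by
  have : IsIso (adj.counit.app (L.obj X)) := by
    rw [← isIso_comp_left_iff (L.map (adj.unit.app X))]
    simpa using IsIso.id _
  exact adj.counit.isIso_app_of_retract h

variable (P : ObjectProperty C) (Q : ObjectProperty D)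

def _root_.CategoryTheory.Adjunction.restrictFullSubcategory
    (hL : ∀ X, P X → Q (L.obj X)) (hG : ∀ Y, Q Y → P (G.obj Y)) :
    ObjectProperty.lift Q (P.ι ⋙ L) (fun X => hL X.obj X.property) ⊣
      ObjectProperty.lift P (Q.ι ⋙ G) (fun Y => hG Y.obj Y.property) :=
  Adjunction.mkOfUnitCounit
    { unit :=
        { app X := ObjectProperty.homMk (adj.unit.app X.obj)
          naturality _ _ f := ObjectProperty.hom_ext _ (adj.unit.naturality f.hom) }
      counit :=
        { app Y := ObjectProperty.homMk (adj.counit.app Y.obj)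
          naturality _ _ f := ObjectProperty.hom_ext _ (adj.counit.naturality f.hom) }
      left_triangle := by ext; simp
      right_triangle := by ext; simp }

lemma _root_.CategoryTheory.Adjunction.isEquivalence_restrictFullSubcategory
    (hL : ∀ X, P X → Q (L.obj X)) (hG : ∀ Y, Q Y → P (G.obj Y))
    (hunit : ∀ X, P X → IsIso (adj.unit.app X))
    (hcounit : ∀ Y, Q Y → IsIso (adj.counit.app Y)) :
    (ObjectProperty.lift P (Q.ι ⋙ G) (fun Y => hG Y.obj Y.property)).IsEquivalence := by
  have (X : P.FullSubcategory) : IsIso ((adj.restrictFullSubcategory P Q hL hG).unit.app X) :=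
    (ObjectProperty.isIso_hom_iff _).1 (hunit X.obj X.property)
  have (Y : Q.FullSubcategory) : IsIso ((adj.restrictFullSubcategory P Q hL hG).counit.app Y) :=
    (ObjectProperty.isIso_hom_iff _).1 (hcounit Y.obj Y.property)
  exact (adj.restrictFullSubcategory P Q hL hG).toEquivalence.isEquivalence_inverse

lemma _root_.CategoryTheory.Adjunction.isIso_unit_app_of_isEquivalence_restrictFullSubcategory
    (hL : ∀ X, P X → Q (L.obj X)) (hG : ∀ Y, Q Y → P (G.obj Y))
    [(ObjectProperty.lift P (Q.ι ⋙ G) (fun Y => hG Y.obj Y.property)).IsEquivalence]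
    {X : C} (hX : P X) : IsIso (adj.unit.app X) :=
  (ObjectProperty.isIso_hom_iff ((adj.restrictFullSubcategory P Q hL hG).unit.app ⟨X, hX⟩)).2
    inferInstance

end RestrictAdjunction

namespace ModuleStruct

variable {T : Monad A} {R : B ⥤ A} (c : ModuleStruct T R) {F : A ⥤ B} (adj : F ⊣ R)

lemma galoisHom_app (a : A) :
    (c.galoisHom F adj).app a = T.map (adj.unit.app a) ≫ c.α.app (F.obj a) := by
  simp [galoisHom]

lemma freeComparison_app_f (a : A) :
    ((c.freeComparison F adj).app a).f = (c.galoisHom F adj).app a := by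
  simp only [freeComparison, galoisHom_app, Monad.adj_counit]
  rfl

lemma unit_comp_galoisHom_app (a : A) :
    T.η.app a ≫ (c.galoisHom F adj).app a = adj.unit.app a := by
  rw [galoisHom_app, ← T.η.naturality_assoc]
  exact (congrArg (adj.unit.app a ≫ ·) (c.unit (F.obj a))).trans (Category.comp_id _)

lemma isIso_galoisHom_iff : IsIso (c.galoisHom F adj) ↔ IsIso (c.freeComparison F adj) := by
  simp only [NatTrans.isIso_iff_isIso_app, ← freeComparison_app_f]
  exact forall_congr' fun a => isIso_iff_of_reflects_iso ((c.freeComparison F adj).app a) T.forget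

variable {Lbar : T.Algebra ⥤ B} (adj' : Lbar ⊣ c.lift)

lemma freeComparison_app_eq (a : A) :
    (c.freeComparison F adj).app a = adj'.unit.app (T.free.obj a) ≫
      c.lift.map (((T.adj.comp adj').leftAdjointUniq adj).hom.app a) := by
  -- Maps out of a free algebra are determined by their restriction along `T.η`; there both
  -- sides restrict to `η_a`, the right one because `L̄ ∘ φ_T` and `F` are left adjoints of `R`.
  apply (T.adj.homEquiv _ _).injective
  have lhs : T.η.app a ≫ ((c.freeComparison F adj).app a).f = adj.unit.app a := by
    rw [freeComparison_app_f]
    exact c.unit_comp_galoisHom_app adj a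
  have rhs := Adjunction.unit_leftAdjointUniq_hom_app (T.adj.comp adj') adj a
  rw [Adjunction.comp_unit_app] at rhs
  rw [Adjunction.homEquiv_unit, Adjunction.homEquiv_unit, Functor.map_comp, ← Category.assoc]
  simp only [Monad.adj_unit] at rhs ⊢
  exact lhs.trans rhs.symm

lemma isIso_freeComparison_iff :
    IsIso (c.freeComparison F adj) ↔ ∀ a, IsIso (adj'.unit.app (T.free.obj a)) := by
  simp only [NatTrans.isIso_iff_isIso_app, c.freeComparison_app_eq adj adj', isIso_comp_right_iff]

end ModuleStruct

section Projectives

variable {T : Monad A} {R : B ⥤ A} {c : ModuleStruct T R} {F : A ⥤ B} {Lbar : T.Algebra ⥤ B}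

lemma fProjective_obj_of_fProjective (adj : F ⊣ R) (adj' : Lbar ⊣ c.lift) {X : T.Algebra}
    (hX : FProjective T.forget X) : FProjective R (Lbar.obj X) := by
  obtain ⟨h⟩ := T.adj.nonempty_retract_of_fProjective hX
  exact FProjective.of_retract
    ((h.map Lbar).trans (((T.adj.comp adj').leftAdjointUniq adj).app X.A).retract)
    (adj.fProjective_obj X.A)

lemma nonempty_retract_obj_free_of_fProjective (adj : F ⊣ R) (adj' : Lbar ⊣ c.lift) {b : B}
    (hb : FProjective R b) : Nonempty (Retract b (Lbar.obj (T.free.obj (R.obj b)))) := by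
  obtain ⟨h⟩ := adj.nonempty_retract_of_fProjective hb
  exact ⟨h.trans (((T.adj.comp adj').leftAdjointUniq adj).app (R.obj b)).symm.retract⟩

lemma isIso_unit_app_of_fProjective (adj' : Lbar ⊣ c.lift)
    (he : ∀ a, IsIso (adj'.unit.app (T.free.obj a))) {X : T.Algebra}
    (hX : FProjective T.forget X) : IsIso (adj'.unit.app X) := by
  obtain ⟨h⟩ := T.adj.nonempty_retract_of_fProjective hX
  have := he X.A
  exact adj'.unit.isIso_app_of_retract h

lemma fProjective_lift_obj (adj : F ⊣ R) (adj' : Lbar ⊣ c.lift)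
    (he : ∀ a, IsIso (adj'.unit.app (T.free.obj a))) {b : B} (hb : FProjective R b) :
    FProjective T.forget (c.lift.obj b) := by
  obtain ⟨h⟩ := nonempty_retract_obj_free_of_fProjective adj adj' hb
  exact FProjective.of_retract ((h.map c.lift).trans (asIso (adj'.unit.app _)).symm.retract)
    (T.adj.fProjective_obj _)

lemma isIso_counit_app_of_fProjective (adj : F ⊣ R) (adj' : Lbar ⊣ c.lift)
    (he : ∀ a, IsIso (adj'.unit.app (T.free.obj a))) {b : B} (hb : FProjective R b) :
    IsIso (adj'.counit.app b) :=
  adj'.isIso_counit_app_of_retract (nonempty_retract_obj_free_of_fProjective adj adj' hb).some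

end Projectives

theorem statement1_general (T : Monad A) (R : B ⥤ A) (F : A ⥤ B)
    (adj : F ⊣ R) (c : ModuleStruct T R)
    (Lbar : T.Algebra ⥤ B) (adj' : Lbar ⊣ c.lift) :
    List.TFAE
      [ IsIso (c.galoisHom F adj),
        IsIso (c.freeComparison F adj),
        ∃ h : ∀ b : B, FProjective R b → FProjective T.forget (c.lift.obj b),
          (ObjectProperty.lift (FProjective T.forget)
            (ObjectProperty.ι (FProjective R) ⋙ c.lift)
            (fun X => h X.obj X.property)).IsEquivalence,
        ∀ X : T.Algebra, FProjective T.forget X → IsIso (adj'.unit.app X),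
        ∀ a : A, IsIso (adj'.unit.app (T.free.obj a)) ] := by
  have hL (X : T.Algebra) (hX : FProjective T.forget X) : FProjective R (Lbar.obj X) :=
    fProjective_obj_of_fProjective adj adj' hX
  tfae_have 1 ↔ 2 := c.isIso_galoisHom_iff adj
  tfae_have 2 ↔ 5 := c.isIso_freeComparison_iff adj adj'
  tfae_have 4 → 5 := fun hd a => hd _ (T.adj.fProjective_obj a)
  tfae_have 5 → 4 := fun he X hX => isIso_unit_app_of_fProjective adj' he hX
  tfae_have 5 → 3 := fun he =>
    ⟨fun b hb => fProjective_lift_obj adj adj' he hb,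
      adj'.isEquivalence_restrictFullSubcategory _ _ hL _
        (fun X hX => isIso_unit_app_of_fProjective adj' he hX)
        (fun b hb => isIso_counit_app_of_fProjective adj adj' he hb)⟩
  tfae_have 3 → 4 := fun ⟨h, _⟩ X hX =>
    adj'.isIso_unit_app_of_isEquivalence_restrictFullSubcategory _ _ hL h hX
  tfae_finish

/-- **Characterization of `T`-Galois module functors** (Theorem 1.15).
Let `B` admit coequalisers of reflexive pairs, `T` a monad on `A`, `R : B ⥤ A` a
`T`-module functor with left adjoint `F`, `R̄ : B ⥤ A_T` its lifting and `L̄` a left adjoint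
of `R̄` (with unit `η̄`).  Then the following are equivalent:
(a) the monad morphism `t : T ⟶ RF` is an isomorphism (`R` is `T`-Galois);
(b) the composite `ε_T R̄F ∘ φ_T η : φ_T ⟶ R̄F` is an isomorphism;
(c) `R̄` restricts to an equivalence `Proj(R, B) ≃ Proj(U_T, A_T)`;
(d) `η̄` is an isomorphism on every `U_T`-projective object of `A_T`;
(e) `η̄_{φ_T(a)}` is an isomorphism for every `a : A`. -/
theorem statement1 [HasReflexiveCoequalizers B] (T : Monad A) (R : B ⥤ A) (F : A ⥤ B)
    (adj : F ⊣ R) (c : ModuleStruct T R)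
    (Lbar : T.Algebra ⥤ B) (adj' : Lbar ⊣ c.lift) :
    List.TFAE
      [ IsIso (c.galoisHom F adj),
        IsIso (c.freeComparison F adj),
        ∃ h : ∀ b : B, FProjective R b → FProjective T.forget (c.lift.obj b),
          (ObjectProperty.lift (FProjective T.forget)
            (ObjectProperty.ι (FProjective R) ⋙ c.lift)
            (fun X => h X.obj X.property)).IsEquivalence,
        ∀ X : T.Algebra, FProjective T.forget X → IsIso (adj'.unit.app X),
        ∀ a : A, IsIso (adj'.unit.app (T.free.obj a)) ] :=
  statement1_general T R F adj c Lbar adj'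

end Paper
end

section
/- Let B be a category admitting equalisers, G = (G, δ, ε) a comonad on a category A, and F : B → A a left G-comodule functor with right adjoint R. Then the right adjoint R̄ : A^G → B of the lifted functor F̄ : B → A^G restricts to a functor R̄' : Inj(U^G, A^G) → Inj(F, B); that is, if (a, θ_a) ∈ A^G is U^G-injective, then R̄(a, θ_a) is an F-injective object of B. -/
open CategoryTheory CategoryTheory.Limits

namespace Paper

variable {A : Type*} [Category A] {B : Type*} [Category B]

theorem FInjective.of_adjunction {C : Type*} [Category C] {L : B ⥤ C} {R : C ⥤ B}
    (adj : L ⊣ R) (U : C ⥤ A) {X : C} (hX : FInjective U X) :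
    FInjective (L ⋙ U) (R.obj X) := by
  intro b₁ b₂ f g hf
  obtain ⟨h, hh⟩ := hX (L.map f) ((adj.homEquiv b₁ X).symm g) hf
  refine ⟨adj.homEquiv b₂ X h, ?_⟩
  rw [← adj.homEquiv_naturality_left, hh, Equiv.apply_symm_apply]

theorem statement2_general (G : Comonad A) (F : B ⥤ A) (c : ComoduleStruct G F)
    (Rbar : G.Coalgebra ⥤ B) (adj' : c.lift ⊣ Rbar) :
    ∀ X : G.Coalgebra, FInjective G.forget X → FInjective F (Rbar.obj X) :=
  -- `c.lift ⋙ G.forget` is `F` by definition.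
  fun _ hX => FInjective.of_adjunction adj' G.forget hX

/-- **Proposition 1.6.**  Let `B` admit equalisers, `G` a comonad on `A`, and `F : B ⥤ A`
a left `G`-comodule functor with right adjoint `R`.  Then the right adjoint
`R̄ : A^G ⥤ B` of the lifted functor `F̄` restricts to a functor
`Inj(U^G, A^G) ⥤ Inj(F, B)`: it sends `U^G`-injective comodules to `F`-injective objects. -/
theorem statement2 [HasEqualizers B] (G : Comonad A) (F : B ⥤ A) (R : A ⥤ B)
    (adj : F ⊣ R) (c : ComoduleStruct G F)
    (Rbar : G.Coalgebra ⥤ B) (adj' : c.lift ⊣ Rbar) :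
    ∀ X : G.Coalgebra, FInjective G.forget X → FInjective F (Rbar.obj X) :=
  statement2_general G F c Rbar adj'

end Paper
end

section
/- Let λ : TG → GT be an entwining from a monad T = (T, m, e) to a comonad G = (G, δ, ε) on a category A, and let T̂ be the lifting of T to A^G. Then the assignment K ↦ U^G(α_K), where α_K : T̂φ^G → φ^G is the left T̂-module structure on φ^G corresponding to K, yields a bijection between (i) functors K : A → (A^G)_{T̂} satisfying U_{T̂} ∘ K = φ^G, and (ii) left T-module structures α : TG → G on the functor G (i.e., α ∘ eG = id and α ∘ mG = α ∘ Tα) satisfying δ ∘ α = Gα ∘ λG ∘ Tδ. -/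
open CategoryTheory CategoryTheory.Limits

namespace Paper


variable {A : Type*} [Category A]

/-- An entwining (mixed distributive law) `λ : TG ⟶ GT` from a monad `T` to a comonad `G`. -/
structure Entwining (T : Monad A) (G : Comonad A) where
  lam : (G : A ⥤ A) ⋙ (T : A ⥤ A) ⟶ (T : A ⥤ A) ⋙ (G : A ⥤ A)
  comp_mul : ∀ a : A, T.μ.app ((G : A ⥤ A).obj a) ≫ lam.app a =
      (T : A ⥤ A).map (lam.app a) ≫ lam.app ((T : A ⥤ A).obj a) ≫
        (G : A ⥤ A).map (T.μ.app a)
  comp_unit : ∀ a : A, T.η.app ((G : A ⥤ A).obj a) ≫ lam.app a = (G : A ⥤ A).map (T.η.app a)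
  delta_comp : ∀ a : A, lam.app a ≫ G.δ.app ((T : A ⥤ A).obj a) =
      (T : A ⥤ A).map (G.δ.app a) ≫ lam.app ((G : A ⥤ A).obj a) ≫
        (G : A ⥤ A).map (lam.app a)
  eps_comp : ∀ a : A, lam.app a ≫ G.ε.app ((T : A ⥤ A).obj a) = (T : A ⥤ A).map (G.ε.app a)

namespace Entwining

variable {T : Monad A} {G : Comonad A} (E : Entwining T G)

lemma lam_natural {a b : A} (f : a ⟶ b) :
    (T : A ⥤ A).map ((G : A ⥤ A).map f) ≫ E.lam.app b =
      E.lam.app a ≫ (G : A ⥤ A).map ((T : A ⥤ A).map f) :=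
  E.lam.naturality f

/-- The value of the lifted comonad `Ĝ` on an object of `A_T`:
`Ĝ(a, h) = (G(a), G(h) ∘ λ_a)`. -/
@[simps]
def liftAlgebra (X : T.Algebra) : T.Algebra where
  A := (G : A ⥤ A).obj X.A
  a := E.lam.app X.A ≫ (G : A ⥤ A).map X.a
  unit := by
    rw [← Category.assoc, E.comp_unit, ← Functor.map_comp, X.unit]
    simp
  assoc := by
    calc T.μ.app ((G : A ⥤ A).obj X.A) ≫ E.lam.app X.A ≫ (G : A ⥤ A).map X.a
        = (T.μ.app ((G : A ⥤ A).obj X.A) ≫ E.lam.app X.A) ≫ (G : A ⥤ A).map X.a := by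
          rw [Category.assoc]
      _ = (T : A ⥤ A).map (E.lam.app X.A) ≫ E.lam.app ((T : A ⥤ A).obj X.A) ≫
            (G : A ⥤ A).map (T.μ.app X.A) ≫ (G : A ⥤ A).map X.a := by
          rw [E.comp_mul]; simp [Category.assoc]
      _ = (T : A ⥤ A).map (E.lam.app X.A) ≫ E.lam.app ((T : A ⥤ A).obj X.A) ≫
            (G : A ⥤ A).map ((T : A ⥤ A).map X.a) ≫ (G : A ⥤ A).map X.a := by
          rw [← Functor.map_comp, X.assoc, Functor.map_comp]
      _ = (T : A ⥤ A).map (E.lam.app X.A) ≫ (T : A ⥤ A).map ((G : A ⥤ A).map X.a) ≫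
            E.lam.app X.A ≫ (G : A ⥤ A).map X.a := by
          rw [← Category.assoc (E.lam.app ((T : A ⥤ A).obj X.A)), ← E.lam_natural X.a]
          simp [Category.assoc]
      _ = (T : A ⥤ A).map (E.lam.app X.A ≫ (G : A ⥤ A).map X.a) ≫
            E.lam.app X.A ≫ (G : A ⥤ A).map X.a := by
          rw [Functor.map_comp, Category.assoc]

/-- The lifting `Ĝ` of the comonad `G` to the Eilenberg–Moore category `A_T`
along the entwining `λ`. -/
@[simps]
def liftedComonad : Comonad (T.Algebra) where
  obj X := E.liftAlgebra X
  map {X Y} f :=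
    { f := (G : A ⥤ A).map f.f
      h := by
        simp only [liftAlgebra_a]
        calc (T : A ⥤ A).map ((G : A ⥤ A).map f.f) ≫ E.lam.app Y.A ≫ (G : A ⥤ A).map Y.a
            = (E.lam.app X.A ≫ (G : A ⥤ A).map ((T : A ⥤ A).map f.f)) ≫
                (G : A ⥤ A).map Y.a := by
              rw [← Category.assoc, E.lam_natural f.f]
          _ = E.lam.app X.A ≫ (G : A ⥤ A).map ((T : A ⥤ A).map f.f ≫ Y.a) := by
              rw [Category.assoc, ← Functor.map_comp]
          _ = E.lam.app X.A ≫ (G : A ⥤ A).map (X.a ≫ f.f) := by rw [f.h]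
          _ = (E.lam.app X.A ≫ (G : A ⥤ A).map X.a) ≫ (G : A ⥤ A).map f.f := by
              rw [Functor.map_comp, Category.assoc] }
  map_id X := by ext; exact (G : A ⥤ A).map_id X.A
  map_comp f g := by ext; exact (G : A ⥤ A).map_comp f.f g.f
  ε :=
    { app := fun X =>
        { f := G.ε.app X.A
          h := by
            change (T : A ⥤ A).map (G.ε.app X.A) ≫ X.a =
              (E.lam.app X.A ≫ (G : A ⥤ A).map X.a) ≫ G.ε.app X.A
            have hnat : (G : A ⥤ A).map X.a ≫ G.ε.app X.A =
                G.ε.app ((T : A ⥤ A).obj X.A) ≫ X.a := by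
              simpa using (G.ε.naturality X.a).symm
            rw [Category.assoc, hnat, ← Category.assoc, E.eps_comp] }
      naturality := fun X Y f => by ext; exact G.ε.naturality f.f }
  δ :=
    { app := fun X =>
        { f := G.δ.app X.A
          h := by
            dsimp
            calc (T : A ⥤ A).map (G.δ.app X.A) ≫ E.lam.app ((G : A ⥤ A).obj X.A) ≫
                  (G : A ⥤ A).map (E.lam.app X.A ≫ (G : A ⥤ A).map X.a)
                = (T : A ⥤ A).map (G.δ.app X.A) ≫ E.lam.app ((G : A ⥤ A).obj X.A) ≫
                    (G : A ⥤ A).map (E.lam.app X.A) ≫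
                    (G : A ⥤ A).map ((G : A ⥤ A).map X.a) := by
                  rw [Functor.map_comp]
              _ = (E.lam.app X.A ≫ G.δ.app ((T : A ⥤ A).obj X.A)) ≫
                    (G : A ⥤ A).map ((G : A ⥤ A).map X.a) := by
                  rw [E.delta_comp]; simp [Category.assoc]
              _ = E.lam.app X.A ≫ (G : A ⥤ A).map X.a ≫ G.δ.app X.A := by
                  have hnat : (G : A ⥤ A).map X.a ≫ G.δ.app X.A =
                      G.δ.app ((T : A ⥤ A).obj X.A) ≫
                        (G : A ⥤ A).map ((G : A ⥤ A).map X.a) := by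
                    simpa using (G.δ.naturality X.a).symm
                  rw [hnat, Category.assoc]
              _ = (E.lam.app X.A ≫ (G : A ⥤ A).map X.a) ≫ G.δ.app X.A := by
                  rw [Category.assoc] }
      naturality := fun X Y f => by ext; exact G.δ.naturality f.f }
  coassoc X := by ext; exact G.coassoc X.A
  left_counit X := by ext; exact G.left_counit X.A
  right_counit X := by ext; exact G.right_counit X.A


/-- The value of the lifted monad `T̂` on an object of `A^G`: `T̂(a, θ) = (T(a), λ_a ∘ T(θ))`. -/
@[simps]
def liftCoalgebra (X : G.Coalgebra) : G.Coalgebra where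
  A := (T : A ⥤ A).obj X.A
  a := (T : A ⥤ A).map X.a ≫ E.lam.app X.A
  counit := by
    rw [Category.assoc, E.eps_comp, ← Functor.map_comp, X.counit]
    simp
  coassoc := by
    calc ((T : A ⥤ A).map X.a ≫ E.lam.app X.A) ≫ G.δ.app ((T : A ⥤ A).obj X.A)
        = (T : A ⥤ A).map X.a ≫ (T : A ⥤ A).map (G.δ.app X.A) ≫
            E.lam.app ((G : A ⥤ A).obj X.A) ≫ (G : A ⥤ A).map (E.lam.app X.A) := by
          rw [Category.assoc, E.delta_comp]
      _ = (T : A ⥤ A).map (X.a ≫ G.δ.app X.A) ≫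
            E.lam.app ((G : A ⥤ A).obj X.A) ≫ (G : A ⥤ A).map (E.lam.app X.A) := by
          rw [Functor.map_comp, Category.assoc]
      _ = (T : A ⥤ A).map X.a ≫ (T : A ⥤ A).map ((G : A ⥤ A).map X.a) ≫
            E.lam.app ((G : A ⥤ A).obj X.A) ≫ (G : A ⥤ A).map (E.lam.app X.A) := by
          rw [X.coassoc, Functor.map_comp, Category.assoc]
      _ = (T : A ⥤ A).map X.a ≫ E.lam.app X.A ≫
            (G : A ⥤ A).map ((T : A ⥤ A).map X.a) ≫ (G : A ⥤ A).map (E.lam.app X.A) := by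
          rw [← Category.assoc ((T : A ⥤ A).map ((G : A ⥤ A).map X.a)), E.lam_natural X.a]
          simp only [Category.assoc]
      _ = ((T : A ⥤ A).map X.a ≫ E.lam.app X.A) ≫
            (G : A ⥤ A).map ((T : A ⥤ A).map X.a ≫ E.lam.app X.A) := by
          rw [Functor.map_comp]
          simp only [Category.assoc]


/-- The lifting of the endofunctor `T` to `A^G`. -/
@[simps]
def liftFunctorT : G.Coalgebra ⥤ G.Coalgebra where
  obj X := E.liftCoalgebra X
  map {X Y} f :=
    { f := (T : A ⥤ A).map f.f
      h := by
        simp only [liftCoalgebra_a]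
        calc ((T : A ⥤ A).map X.a ≫ E.lam.app X.A) ≫ (G : A ⥤ A).map ((T : A ⥤ A).map f.f)
            = (T : A ⥤ A).map X.a ≫ E.lam.app X.A ≫
                (G : A ⥤ A).map ((T : A ⥤ A).map f.f) := by rw [Category.assoc]
          _ = (T : A ⥤ A).map X.a ≫ (T : A ⥤ A).map ((G : A ⥤ A).map f.f) ≫
                E.lam.app Y.A := by rw [← E.lam_natural f.f]
          _ = (T : A ⥤ A).map (X.a ≫ (G : A ⥤ A).map f.f) ≫ E.lam.app Y.A := by
              rw [Functor.map_comp, Category.assoc]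
          _ = (T : A ⥤ A).map (f.f ≫ Y.a) ≫ E.lam.app Y.A := by rw [f.h]
          _ = (T : A ⥤ A).map f.f ≫ (T : A ⥤ A).map Y.a ≫ E.lam.app Y.A := by
              rw [Functor.map_comp, Category.assoc] }
  map_id X := by ext; exact (T : A ⥤ A).map_id X.A
  map_comp f g := by ext; exact (T : A ⥤ A).map_comp f.f g.f

/-- The unit of the lifted monad. -/
@[simps]
def liftEta : 𝟭 (G.Coalgebra) ⟶ E.liftFunctorT where
  app X :=
    { f := T.η.app X.A
      h := by
        change X.a ≫ (G : A ⥤ A).map (T.η.app X.A) =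
          T.η.app X.A ≫ ((T : A ⥤ A).map X.a ≫ E.lam.app X.A)
        have hnat : X.a ≫ T.η.app ((G : A ⥤ A).obj X.A) =
            T.η.app X.A ≫ (T : A ⥤ A).map X.a := by
          simpa using T.η.naturality X.a
        rw [← Category.assoc, ← hnat, Category.assoc, E.comp_unit] }
  naturality X Y f := by
    ext
    show f.f ≫ T.η.app Y.A = T.η.app X.A ≫ (T : A ⥤ A).map f.f
    simpa using T.η.naturality f.f

/-- The multiplication of the lifted monad. -/
@[simps]
def liftMu : E.liftFunctorT ⋙ E.liftFunctorT ⟶ E.liftFunctorT where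
  app X :=
    { f := T.μ.app X.A
      h := by
        dsimp
        have hnat : (T : A ⥤ A).map ((T : A ⥤ A).map X.a) ≫
              T.μ.app ((G : A ⥤ A).obj X.A) = T.μ.app X.A ≫ (T : A ⥤ A).map X.a := by
          simpa using T.μ.naturality X.a
        calc ((T : A ⥤ A).map ((T : A ⥤ A).map X.a ≫ E.lam.app X.A) ≫
                E.lam.app ((T : A ⥤ A).obj X.A)) ≫ (G : A ⥤ A).map (T.μ.app X.A)
            = (T : A ⥤ A).map ((T : A ⥤ A).map X.a) ≫
                ((T : A ⥤ A).map (E.lam.app X.A) ≫ E.lam.app ((T : A ⥤ A).obj X.A) ≫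
                  (G : A ⥤ A).map (T.μ.app X.A)) := by
              rw [Functor.map_comp]
              simp only [Category.assoc]
          _ = (T : A ⥤ A).map ((T : A ⥤ A).map X.a) ≫
                T.μ.app ((G : A ⥤ A).obj X.A) ≫ E.lam.app X.A := by
              rw [← E.comp_mul]
          _ = (T.μ.app X.A ≫ (T : A ⥤ A).map X.a) ≫ E.lam.app X.A := by
              rw [← Category.assoc, hnat]
          _ = T.μ.app X.A ≫ (T : A ⥤ A).map X.a ≫ E.lam.app X.A := by
              rw [Category.assoc] }
  naturality X Y f := by
    ext
    show (T : A ⥤ A).map ((T : A ⥤ A).map f.f) ≫ T.μ.app Y.A =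
      T.μ.app X.A ≫ (T : A ⥤ A).map f.f
    simpa using T.μ.naturality f.f

/-- The lifting `T̂` of the monad `T` to the Eilenberg–Moore category `A^G`
along the entwining `λ`. -/
def liftedMonad : Monad (G.Coalgebra) where
  toFunctor := E.liftFunctorT
  η := E.liftEta
  μ := E.liftMu
  assoc X := by ext; exact T.assoc X.A
  left_unit X := by ext; exact T.left_unit X.A
  right_unit X := by ext; exact T.right_unit X.A


end Entwining


namespace Entwining

variable {A : Type*} [Category A] {F : Monad A} {G : Comonad A} (E : Entwining F G)

/-- The canonical natural transformation assembling the structure morphisms of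
algebras over a monad. -/
@[simps]
def algStructNat {C : Type*} [Category C] (M : Monad C) :
    M.forget ⋙ (M : C ⥤ C) ⟶ M.forget where
  app X := X.a
  naturality X Y f := by exact f.h

/-- The left `T̂`-module structure `α_K : T̂φ^G ⟶ φ^G` on the cofree functor `φ^G`
corresponding to a functor `K : A ⥤ (A^G)_{T̂}` with `U_{T̂} ∘ K = φ^G`. -/
def structOfKMod (K : A ⥤ E.liftedMonad.Algebra)
    (hK : K ⋙ Monad.forget E.liftedMonad = G.cofree) :
    G.cofree ⋙ (E.liftedMonad : G.Coalgebra ⥤ G.Coalgebra) ⟶ G.cofree :=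
  Functor.whiskerRight (eqToHom hK.symm) (E.liftedMonad : G.Coalgebra ⥤ G.Coalgebra) ≫
    Functor.whiskerLeft K (algStructNat E.liftedMonad) ≫ eqToHom hK

/-- The underlying left `T`-module structure `α = U^G(α_K) : TG ⟶ G` on the functor `G`
induced by a functor `K` as above. -/
def inducedMod (K : A ⥤ E.liftedMonad.Algebra)
    (hK : K ⋙ Monad.forget E.liftedMonad = G.cofree) :
    (G : A ⥤ A) ⋙ (F : A ⥤ A) ⟶ (G : A ⥤ A) :=
  Functor.whiskerRight (E.structOfKMod K hK) G.forget

/-- The conditions on `α : TG ⟶ G` appearing in Proposition 2.1: `α` is a left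
`T`-module structure on `G` and the diagram `δ ∘ α = Gα ∘ λG ∘ Tδ` commutes. -/
def ModLaws (α : (G : A ⥤ A) ⋙ (F : A ⥤ A) ⟶ (G : A ⥤ A)) : Prop :=
  (∀ a : A, F.η.app ((G : A ⥤ A).obj a) ≫ α.app a = 𝟙 ((G : A ⥤ A).obj a)) ∧
  (∀ a : A, F.μ.app ((G : A ⥤ A).obj a) ≫ α.app a =
    (F : A ⥤ A).map (α.app a) ≫ α.app a) ∧
  (∀ a : A, α.app a ≫ G.δ.app a =
    (F : A ⥤ A).map (G.δ.app a) ≫ E.lam.app ((G : A ⥤ A).obj a) ≫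
      (G : A ⥤ A).map (α.app a))

end Entwining

end Paper

/-!
For any monad `M` on `C` and functor `L : D ⥤ C`, lifts `K : D ⥤ M.Algebra` of `L` along the
forgetful functor are the same as left `M`-actions `L ⋙ M ⟶ L`. Applied to `M = T̂` and
`L = φ^G`, it remains to compare `T̂`-actions on `φ^G` with `T`-actions on `G`. A `T̂`-action
has components that are comodule maps `T(G a) ⟶ G a`. Since `U^G` is faithful, such an action
is determined by its underlying `α : TG ⟶ G`, its laws are the `T`-module laws of `α`, and the
components of `α` are comodule maps exactly when `δ ∘ α = Gα ∘ λG ∘ Tδ`.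
-/

namespace CategoryTheory.Monad

variable {C D : Type*} [Category C] [Category D] {M : Monad C} {L : D ⥤ C}

structure IsAction (α : L ⋙ (M : C ⥤ C) ⟶ L) : Prop where
  unit : ∀ d, M.η.app (L.obj d) ≫ α.app d = 𝟙 (L.obj d)
  assoc : ∀ d, M.μ.app (L.obj d) ≫ α.app d = (M : C ⥤ C).map (α.app d) ≫ α.app d

def actionOfLift (K : D ⥤ M.Algebra) (hK : K ⋙ M.forget = L) : L ⋙ (M : C ⥤ C) ⟶ L :=
  Functor.whiskerRight (eqToHom hK.symm) (M : C ⥤ C) ≫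
    Functor.whiskerLeft K (Paper.Entwining.algStructNat M) ≫ eqToHom hK

lemma actionOfLift_rfl_app (K : D ⥤ M.Algebra) (d : D) :
    (actionOfLift K rfl).app d = (K.obj d).a := by
  simp only [actionOfLift, eqToHom_refl, Functor.whiskerRight_id', Category.comp_id,
    Category.id_comp]
  rfl

lemma isAction_actionOfLift (K : D ⥤ M.Algebra) (hK : K ⋙ M.forget = L) :
    IsAction (actionOfLift K hK) := by
  -- `L` is a variable, so `hK` can be substituted away, and with it every `eqToHom`.
  subst hK
  exact ⟨fun d => by rw [actionOfLift_rfl_app]; exact (K.obj d).unit,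
    fun d => by rw [actionOfLift_rfl_app]; exact (K.obj d).assoc⟩

def liftOfAction (α : L ⋙ (M : C ⥤ C) ⟶ L) (hα : IsAction α) : D ⥤ M.Algebra where
  obj d := ⟨L.obj d, α.app d, hα.unit d, hα.assoc d⟩
  map f := ⟨L.map f, α.naturality f⟩

lemma liftOfAction_comp_forget (α : L ⋙ (M : C ⥤ C) ⟶ L) (hα : IsAction α) :
    liftOfAction α hα ⋙ M.forget = L :=
  rfl

lemma actionOfLift_liftOfAction (α : L ⋙ (M : C ⥤ C) ⟶ L) (hα : IsAction α) :
    actionOfLift (liftOfAction α hα) (liftOfAction_comp_forget α hα) = α := by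
  ext d
  exact actionOfLift_rfl_app (liftOfAction α hα) d

lemma liftOfAction_actionOfLift (K : D ⥤ M.Algebra) (hK : K ⋙ M.forget = L) :
    liftOfAction (actionOfLift K hK) (isAction_actionOfLift K hK) = K := by
  subst hK
  refine Functor.ext (fun d => ?_) (fun d d' f => ?_)
  · change Algebra.mk _ _ _ _ = Algebra.mk (K.obj d).A (K.obj d).a (K.obj d).unit (K.obj d).assoc
    congr 1
    exact actionOfLift_rfl_app K d
  · apply M.forget.map_injective
    rw [Functor.map_comp, Functor.map_comp, eqToHom_map, eqToHom_map]
    erw [eqToHom_refl, eqToHom_refl, Category.id_comp, Category.comp_id]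
    rfl

lemma actionOfLift_injective {K K' : D ⥤ M.Algebra} {hK : K ⋙ M.forget = L}
    {hK' : K' ⋙ M.forget = L} (h : actionOfLift K hK = actionOfLift K' hK') : K = K' := by
  rw [← liftOfAction_actionOfLift K hK, ← liftOfAction_actionOfLift K' hK']
  congr 1

end CategoryTheory.Monad

namespace Paper

variable {A : Type*} [Category A]

namespace Entwining

variable {T : Monad A} {G : Comonad A} (E : Entwining T G)

lemma inducedMod_eq_whiskerRight_actionOfLift (K : A ⥤ E.liftedMonad.Algebra)
    (hK : K ⋙ Monad.forget E.liftedMonad = G.cofree) :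
    E.inducedMod K hK = Functor.whiskerRight (Monad.actionOfLift K hK) G.forget :=
  rfl

def cofreeAction (α : (G : A ⥤ A) ⋙ (T : A ⥤ A) ⟶ (G : A ⥤ A))
    (hα : ∀ a : A, α.app a ≫ G.δ.app a =
      (T : A ⥤ A).map (G.δ.app a) ≫ E.lam.app ((G : A ⥤ A).obj a) ≫
        (G : A ⥤ A).map (α.app a)) :
    G.cofree ⋙ (E.liftedMonad : G.Coalgebra ⥤ G.Coalgebra) ⟶ G.cofree where
  app a :=
    { f := α.app a
      h := by
        change ((T : A ⥤ A).map (G.δ.app a) ≫ E.lam.app ((G : A ⥤ A).obj a)) ≫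
          (G : A ⥤ A).map (α.app a) = α.app a ≫ G.δ.app a
        rw [Category.assoc, hα] }
  naturality _ _ f := by
    ext
    exact α.naturality f

lemma isAction_cofreeAction {α : (G : A ⥤ A) ⋙ (T : A ⥤ A) ⟶ (G : A ⥤ A)} (hα : E.ModLaws α) :
    Monad.IsAction (E.cofreeAction α hα.2.2) :=
  ⟨fun a => Comonad.Coalgebra.Hom.ext (hα.1 a), fun a => Comonad.Coalgebra.Hom.ext (hα.2.1 a)⟩

lemma modLaws_whiskerRight_forget
    {β : G.cofree ⋙ (E.liftedMonad : G.Coalgebra ⥤ G.Coalgebra) ⟶ G.cofree}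
    (hβ : Monad.IsAction β) : E.ModLaws (Functor.whiskerRight β G.forget) :=
  ⟨fun a => congrArg Comonad.Coalgebra.Hom.f (hβ.unit a),
    fun a => congrArg Comonad.Coalgebra.Hom.f (hβ.assoc a),
    fun a => (β.app a).h.symm.trans (Category.assoc _ _ _)⟩

end Entwining

open Entwining in
/-- **Proposition 2.1.**  Let `λ : TG ⟶ GT` be an entwining from a monad `T` to a
comonad `G` on `A` and `T̂` the lifting of `T` to `A^G`.  The assignment
`K ↦ U^G(α_K)` yields a bijection between functors `K : A ⥤ (A^G)_{T̂}` with
`U_{T̂} ∘ K = φ^G` and left `T`-module structures `α : TG ⟶ G` on the functor `G`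
satisfying `δ ∘ α = Gα ∘ λG ∘ Tδ`. -/
theorem statement6 {A : Type*} [Category A] (T : Monad A) (G : Comonad A)
    (E : Entwining T G) :
    (∀ K : {K : A ⥤ E.liftedMonad.Algebra //
        K ⋙ Monad.forget E.liftedMonad = G.cofree},
      E.ModLaws (E.inducedMod K.1 K.2)) ∧
    Function.Injective
      (fun K : {K : A ⥤ E.liftedMonad.Algebra //
          K ⋙ Monad.forget E.liftedMonad = G.cofree} =>
        E.inducedMod K.1 K.2) ∧
    (∀ α : (G : A ⥤ A) ⋙ (T : A ⥤ A) ⟶ (G : A ⥤ A), E.ModLaws α →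
      ∃ K : {K : A ⥤ E.liftedMonad.Algebra //
          K ⋙ Monad.forget E.liftedMonad = G.cofree},
        E.inducedMod K.1 K.2 = α) := by
  refine ⟨fun K => ?_, fun K K' h => ?_, fun α hα => ?_⟩
  · rw [inducedMod_eq_whiskerRight_actionOfLift]
    exact E.modLaws_whiskerRight_forget (Monad.isAction_actionOfLift K.1 K.2)
  · simp only [inducedMod_eq_whiskerRight_actionOfLift] at h
    exact Subtype.ext (Monad.actionOfLift_injective
      (((Functor.whiskeringRight _ _ _).obj G.forget).map_injective h))
  · refine ⟨⟨_, Monad.liftOfAction_comp_forget _ (E.isAction_cofreeAction hα)⟩, ?_⟩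
    rw [inducedMod_eq_whiskerRight_actionOfLift, Monad.actionOfLift_liftOfAction]
    rfl

end Paper
end

section
/- Let i : C → A be a dense functor (C a small category), and let F, F' : A → B be functors having right adjoints U and U' respectively. Then a natural transformation τ : F → F' is an isomorphism if and only if the restricted natural transformation τi : Fi → F'i is an isomorphism. -/
/-!
Pass to the conjugate `σ : U' ⟶ U` of `τ`, which is invertible exactly when `τ` is. Under the
two adjunctions, composing with `σ_b` on `Mor(i c, U' b)` becomes precomposition with `τ_{i c}` on
`Mor(F' (i c), b)`, a bijection when `τi` is invertible. So the restricted Yoneda functor sends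
each `σ_b` to an isomorphism, and, being fully faithful, it reflects isomorphisms.
-/

open CategoryTheory

namespace Paper

universe v u w

variable {C : Type w} [SmallCategory C] {A : Type u} [Category.{v} A]

/-- The restricted Yoneda functor `a ↦ Mor_A(i(−), a)` associated with `i : C ⥤ A`. -/
def restrictedYonedaAt (i : C ⥤ A) : A ⥤ (Cᵒᵖ ⥤ Type v) :=
  yoneda ⋙ (Functor.whiskeringLeft Cᵒᵖ Aᵒᵖ (Type v)).obj i.op

def IsDense (i : C ⥤ A) : Prop :=
  (restrictedYonedaAt i).Full ∧ (restrictedYonedaAt i).Faithful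

lemma IsDense.isIso_of_bijective_comp {i : C ⥤ A} (hi : IsDense i) {a a' : A} (f : a ⟶ a')
    (hf : ∀ c : C, Function.Bijective fun g : i.obj c ⟶ a => g ≫ f) : IsIso f := by
  have := hi.1
  have := hi.2
  have (c : Cᵒᵖ) : IsIso (((restrictedYonedaAt i).map f).app c) :=
    (isIso_iff_bijective _).mpr (hf c.unop)
  have : IsIso ((restrictedYonedaAt i).map f) := NatIso.isIso_of_isIso_app _
  exact isIso_of_reflects_iso f (restrictedYonedaAt i)

section Conjugate

variable {D E : Type*} [Category D] [Category E] {F F' : D ⥤ E} {U U' : E ⥤ D}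
  (adj : F ⊣ U) (adj' : F' ⊣ U') (τ : F ⟶ F')

lemma homEquiv_comp_conjugateEquiv_app {a : D} {b : E} (g : F'.obj a ⟶ b) :
    adj'.homEquiv a b g ≫ (conjugateEquiv adj' adj τ).app b =
      adj.homEquiv a b (τ.app a ≫ g) := by
  rw [adj'.homEquiv_unit, adj.homEquiv_unit, Category.assoc,
    (conjugateEquiv adj' adj τ).naturality, ← Category.assoc, unit_conjugateEquiv,
    Category.assoc, Functor.map_comp]

lemma bijective_comp_conjugateEquiv_app (a : D) [IsIso (τ.app a)] (b : E) :
    Function.Bijective fun f : a ⟶ U'.obj b => f ≫ (conjugateEquiv adj' adj τ).app b := by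
  have : (fun f : a ⟶ U'.obj b => f ≫ (conjugateEquiv adj' adj τ).app b) =
      (adj'.homEquiv a b).symm.trans ((asIso (τ.app a)).symm.homFromEquiv.trans
        (adj.homEquiv a b)) := by
    ext f
    simp only [Equiv.coe_trans, Function.comp_apply]
    rw [Iso.homFromEquiv_apply, Iso.symm_inv, asIso_hom, ← homEquiv_comp_conjugateEquiv_app,
      Equiv.apply_symm_apply]
  rw [this]
  exact Equiv.bijective _

end Conjugate

/-- **Lemma 2.4.**  Let `i : C ⥤ A` be a dense functor (`C` small) and let
`F, F' : A ⥤ B` be functors with right adjoints `U` and `U'` respectively.  A natural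
transformation `τ : F ⟶ F'` is an isomorphism if and only if `τi : Fi ⟶ F'i` is an
isomorphism. -/
theorem statement9 {B : Type*} [Category B] (i : C ⥤ A) (hi : IsDense i)
    (F F' : A ⥤ B) (U U' : B ⥤ A) (adj : F ⊣ U) (adj' : F' ⊣ U') (τ : F ⟶ F') :
    IsIso τ ↔ IsIso (Functor.whiskerLeft i τ) := by
  refine ⟨fun _ => inferInstance, fun _ => ?_⟩
  have (c : C) : IsIso (τ.app (i.obj c)) := inferInstanceAs (IsIso ((i.whiskerLeft τ).app c))
  have (b : B) : IsIso ((conjugateEquiv adj' adj τ).app b) :=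
    hi.isIso_of_bijective_comp _ fun c => bijective_comp_conjugateEquiv_app adj adj' τ _ b
  have : IsIso (conjugateEquiv adj' adj τ) := NatIso.isIso_of_isIso_app _
  exact conjugateEquiv_of_iso adj' adj τ

end Paper
end
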